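/- Let M be a real symmetric positive definite 2n×2n matrix written in block form M = [[M_XX, M_XP],[M_PX, M_PP]] with n×n blocks (so M_PX = M_XPᵀ, M_XX > 0 and M_PP > 0), and let Ω = {z ∈ ℝ^{2n} : Mz·z ≤ ħ}. Then the image of Ω under the orthogonal projection ℝ^{2n} → ℝⁿ, (x,p) ↦ x, equals {x ∈ ℝⁿ : (M_XX − M_XP M_PP⁻¹ M_PX) x·x ≤ ħ}, and the image of Ω under the orthogonal projection (x,p) ↦ p equals {p ∈ ℝⁿ : (M_PP − M_PX M_XX⁻¹ M_XP) p·p ≤ ħ}. -/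

import Mathlib

/-!
Completing the square in the second block, with `D = M_PP` positive definite,
`M (x, y) · (x, y) = D w · w + (M / M_PP) x · x` where `w = y + D⁻¹ M_PX x`. Hence the minimum of
the form over the fibre above `x` is the Schur complement form `(M / M_PP) x · x`, attained at
`y = -D⁻¹ M_PX x`, and the `x`-shadow of the ellipsoid is the Schur complement ellipsoid.
Swapping the two blocks gives the `p`-shadow.
-/

open Matrix ComplexOrder MeasureTheory

noncomputable section

/-- Phase space ℝ^{2n} ≃ ℝⁿ × ℝⁿ, with coordinates z = (x,p). -/
abbrev PS (n : ℕ) := Fin n ⊕ Fin n → ℝ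

def Jmat (n : ℕ) : Matrix (Fin n ⊕ Fin n) (Fin n ⊕ Fin n) ℝ :=
  Matrix.fromBlocks 0 1 (-1) 0

def symp (n : ℕ) (z z' : PS n) : ℝ := (Jmat n).mulVec z ⬝ᵥ z'

def Sp (n : ℕ) : Set (Matrix (Fin n ⊕ Fin n) (Fin n ⊕ Fin n) ℝ) :=
  {S | Sᵀ * Jmat n * S = Jmat n}

namespace Matrix

section Blocks

variable {m n R : Type*} [Ring R] [PartialOrder R] [StarRing R]
  {A : Matrix m m R} {B : Matrix m n R} {C : Matrix n m R} {D : Matrix n n R}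

theorem PosDef.of_fromBlocks₁₁ (h : (fromBlocks A B C D).PosDef) : A.PosDef :=
  h.submatrix Sum.inl_injective

theorem PosDef.of_fromBlocks₂₂ (h : (fromBlocks A B C D).PosDef) : D.PosDef :=
  h.submatrix Sum.inr_injective

end Blocks

variable {m n : Type*} [Fintype m] [Fintype n]

theorem submatrix_mulVec_comp_dotProduct_comp {l α : Type*} [Fintype l]
    [NonUnitalNonAssocSemiring α] (M : Matrix n n α) (e : l ≃ n) (z : n → α) :
    M.submatrix e e *ᵥ (z ∘ e) ⬝ᵥ (z ∘ e) = M *ᵥ z ⬝ᵥ z := by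
  rw [submatrix_mulVec_equiv, comp_equiv_dotProduct_comp_equiv]
  simp [Function.comp_def]

theorem fromBlocks_mulVec_dotProduct_eq₂₂ [DecidableEq n] (A : Matrix m m ℝ) (B : Matrix m n ℝ)
    {D : Matrix n n ℝ} [Invertible D] (hD : D.IsHermitian) (x : m → ℝ) (y : n → ℝ) :
    fromBlocks A B Bᴴ D *ᵥ (x ⊕ᵥ y) ⬝ᵥ (x ⊕ᵥ y) =
      D *ᵥ ((D⁻¹ * Bᴴ) *ᵥ x + y) ⬝ᵥ ((D⁻¹ * Bᴴ) *ᵥ x + y) +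
        (A - B * D⁻¹ * Bᴴ) *ᵥ x ⬝ᵥ x := by
  simpa only [star_trivial, ← dotProduct_mulVec, dotProduct_comm _ (_ *ᵥ _)] using
    schur_complement_eq₂₂ A B x y hD

theorem image_inl_sublevel_fromBlocks [DecidableEq n] (A : Matrix m m ℝ) (B : Matrix m n ℝ)
    {D : Matrix n n ℝ} (hD : D.PosDef) (c : ℝ) :
    (fun z : m ⊕ n → ℝ => z ∘ Sum.inl) '' {z | fromBlocks A B Bᴴ D *ᵥ z ⬝ᵥ z ≤ c} =
      {x | (A - B * D⁻¹ * Bᴴ) *ᵥ x ⬝ᵥ x ≤ c} := by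
  let := hD.isUnit.invertible
  ext x
  constructor
  · rintro ⟨z, hz, rfl⟩
    rw [Set.mem_ofPred, ← Sum.elim_comp_inl_inr z,
      fromBlocks_mulVec_dotProduct_eq₂₂ A B hD.isHermitian] at hz
    have hnonneg := hD.posSemidef.dotProduct_mulVec_nonneg
      ((D⁻¹ * Bᴴ) *ᵥ (z ∘ Sum.inl) + z ∘ Sum.inr)
    simp only [star_trivial, dotProduct_comm _ (D *ᵥ _)] at hnonneg
    exact le_of_add_le_of_nonneg_right hz hnonneg
  · intro hx
    refine ⟨x ⊕ᵥ -((D⁻¹ * Bᴴ) *ᵥ x), ?_, rfl⟩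
    rwa [Set.mem_ofPred, fromBlocks_mulVec_dotProduct_eq₂₂ A B hD.isHermitian, add_neg_cancel,
      mulVec_zero, zero_dotProduct, zero_add]

theorem image_inr_sublevel_fromBlocks [DecidableEq m] {A : Matrix m m ℝ} (hA : A.PosDef)
    (B : Matrix m n ℝ) (D : Matrix n n ℝ) (c : ℝ) :
    (fun z : m ⊕ n → ℝ => z ∘ Sum.inr) '' {z | fromBlocks A B Bᴴ D *ᵥ z ⬝ᵥ z ≤ c} =
      {y | (D - Bᴴ * A⁻¹ * B) *ᵥ y ⬝ᵥ y ≤ c} := by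
  have hswap (z : m ⊕ n → ℝ) : fromBlocks D Bᴴ B A *ᵥ (z ∘ Sum.swap) ⬝ᵥ (z ∘ Sum.swap) =
      fromBlocks A B Bᴴ D *ᵥ z ⬝ᵥ z := by
    simpa using submatrix_mulVec_comp_dotProduct_comp (fromBlocks A B Bᴴ D) (Equiv.sumComm n m) z
  have hinl := image_inl_sublevel_fromBlocks D Bᴴ hA c
  rw [conjTranspose_conjTranspose] at hinl
  rw [← hinl]
  ext y
  constructor
  · rintro ⟨z, hz, rfl⟩
    exact ⟨z ∘ Sum.swap, (hswap z).trans_le hz, rfl⟩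
  · rintro ⟨w, hw, rfl⟩
    refine ⟨w ∘ Sum.swap, ?_, rfl⟩
    rwa [Set.mem_ofPred, ← hswap, Function.comp_assoc, Sum.swap_swap_eq, Function.comp_id]

end Matrix

theorem proj_ellipsoid_schur (n : ℕ) (ℏ : ℝ)
    (Mxx Mxp Mpx Mpp : Matrix (Fin n) (Fin n) ℝ)
    (hM : (Matrix.fromBlocks Mxx Mxp Mpx Mpp).PosDef) :
    ((fun z : PS n => z ∘ Sum.inl) ''
        {z : PS n | (Matrix.fromBlocks Mxx Mxp Mpx Mpp).mulVec z ⬝ᵥ z ≤ ℏ}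
      = {x : Fin n → ℝ | (Mxx - Mxp * Mpp⁻¹ * Mpx).mulVec x ⬝ᵥ x ≤ ℏ}) ∧
    ((fun z : PS n => z ∘ Sum.inr) ''
        {z : PS n | (Matrix.fromBlocks Mxx Mxp Mpx Mpp).mulVec z ⬝ᵥ z ≤ ℏ}
      = {p : Fin n → ℝ | (Mpp - Mpx * Mxx⁻¹ * Mxp).mulVec p ⬝ᵥ p ≤ ℏ}) := by
  obtain ⟨-, hMpx, -, -⟩ := isHermitian_fromBlocks_iff.mp hM.isHermitian
  subst hMpx
  exact ⟨image_inl_sublevel_fromBlocks Mxx Mxp hM.of_fromBlocks₂₂ ℏ,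
    image_inr_sublevel_fromBlocks hM.of_fromBlocks₁₁ Mxp Mpp ℏ⟩
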